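/- If G is a finite simple graph with no isolated vertices and S is a total forcing set of G, then S contains every strong support vertex of G, and for every strong support vertex v of G, at most one leaf neighbor of v lies outside S (i.e., S contains all except possibly one of the leaf neighbors of v). -/

import Mathlib

/-! Basic definitions: (zero) forcing, total forcing, forcing numbers. -/

namespace TotalForcing

variable {V : Type*}

/-- The set of vertices eventually colored by the forcing process starting from `S`:
a vertex is colored if it is in `S`, or if some colored vertex `u` is adjacent to it
while all other neighbors of `u` are already colored (so `v` is the unique
non-colored neighbor of `u`, and `u` forces `v`). -/
inductive Forces (G : SimpleGraph V) (S : Set V) : V → Prop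
  | mem : ∀ {v : V}, v ∈ S → Forces G S v
  | force : ∀ {u v : V}, G.Adj u v → Forces G S u →
      (∀ w, G.Adj u w → w ≠ v → Forces G S w) → Forces G S v

/-- `S` is a forcing set of `G` if the forcing process colors every vertex. -/
def IsForcingSet (G : SimpleGraph V) (S : Set V) : Prop := ∀ v : V, Forces G S v

/-- A total forcing set is a forcing set inducing a subgraph without isolated vertices. -/
def IsTotalForcingSet (G : SimpleGraph V) (S : Set V) : Prop :=
  IsForcingSet G S ∧ ∀ v ∈ S, ∃ u ∈ S, G.Adj v u

/-- The forcing number `F(G)`. -/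
noncomputable def forcingNumber (G : SimpleGraph V) [Fintype V] : ℕ :=
  sInf {n : ℕ | ∃ S : Finset V, S.card = n ∧ IsForcingSet G ↑S}

/-- The total forcing number `F_t(G)`. -/
noncomputable def totalForcingNumber (G : SimpleGraph V) [Fintype V] : ℕ :=
  sInf {n : ℕ | ∃ S : Finset V, S.card = n ∧ IsTotalForcingSet G ↑S}

/-- A leaf is a vertex of degree 1. -/
def IsLeaf (G : SimpleGraph V) (v : V) : Prop := (G.neighborSet v).ncard = 1

/-- The number of leaves of `G`. -/
noncomputable def numLeaves (G : SimpleGraph V) : ℕ := {v : V | IsLeaf G v}.ncard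

/-- A strong support vertex is a vertex with at least two leaf neighbors. -/
def IsStrongSupport (G : SimpleGraph V) (v : V) : Prop :=
  ∃ x y : V, x ≠ y ∧ G.Adj v x ∧ G.Adj v y ∧ IsLeaf G x ∧ IsLeaf G y

end TotalForcing

/-!
A leaf `x` outside `S` can only be colored by its unique neighbor `v`, and only once every
other neighbor of `v` is colored. So if two leaves of `v` were outside `S`, each would have to
be colored before the other. Hence at least one leaf of a strong support vertex `v` lies in
`S`, and since `S` induces no isolated vertex, the only neighbor `v` of that leaf lies in `S`.
-/

namespace TotalForcing

section

variable {V : Type*} {G : SimpleGraph V} {S : Set V}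

lemma IsLeaf.eq_of_adj {x u v : V} (hx : IsLeaf G x) (hu : G.Adj x u) (hv : G.Adj x v) :
    u = v := by
  obtain ⟨a, ha⟩ := Set.ncard_eq_one.mp hx
  have hu' : u ∈ G.neighborSet x := hu
  have hv' : v ∈ G.neighborSet x := hv
  rw [ha, Set.mem_singleton_iff] at hu' hv'
  rw [hu', hv']

lemma Forces.mem_or_mem_of_isLeaf {v x : V} (hx : Forces G S x) (hxl : IsLeaf G x)
    (hvx : G.Adj v x) {y : V} (hyx : y ≠ x) (hyl : IsLeaf G y) (hvy : G.Adj v y) :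
    x ∈ S ∨ y ∈ S := by
  induction hx generalizing y with
  | mem hxS => exact Or.inl hxS
  | @force u x hux _ _ _ ih =>
    obtain rfl : u = v := hxl.eq_of_adj hux.symm hvx.symm
    -- `v` forced `x`, so `y` was colored before `x`: apply the induction hypothesis to `y`.
    exact (ih y hvy hyx hyl hvy hyx.symm hxl hvx).symm

lemma IsForcingSet.subsingleton_isLeaf_notMem (hS : IsForcingSet G S) (v : V) :
    {x : V | G.Adj v x ∧ IsLeaf G x ∧ x ∉ S}.Subsingleton := by
  rintro x ⟨hvx, hxl, hxS⟩ y ⟨hvy, hyl, hyS⟩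
  by_contra hxy
  rcases (hS x).mem_or_mem_of_isLeaf hxl hvx (Ne.symm hxy) hyl hvy with h | h
  exacts [hxS h, hyS h]

lemma IsTotalForcingSet.mem_of_adj_isLeaf (hS : IsTotalForcingSet G S) {v x : V}
    (hvx : G.Adj v x) (hxl : IsLeaf G x) (hxS : x ∈ S) : v ∈ S := by
  obtain ⟨u, huS, hxu⟩ := hS.2 x hxS
  rwa [hxl.eq_of_adj hxu hvx.symm] at huS

end

theorem stmt14_general {V : Type*} (G : SimpleGraph V)
    (S : Set V) (hS : IsTotalForcingSet G S) :
    ∀ v : V, IsStrongSupport G v →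
      v ∈ S ∧ {x : V | G.Adj v x ∧ IsLeaf G x ∧ x ∉ S}.Subsingleton := by
  rintro v ⟨x, y, hxy, hvx, hvy, hxl, hyl⟩
  refine ⟨?_, hS.1.subsingleton_isLeaf_notMem v⟩
  rcases (hS.1 x).mem_or_mem_of_isLeaf hxl hvx hxy.symm hyl hvy with hxS | hyS
  · exact hS.mem_of_adj_isLeaf hvx hxl hxS
  · exact hS.mem_of_adj_isLeaf hvy hyl hyS

/-- If `G` has no isolated vertices and `S` is a total forcing set of
`G`, then `S` contains every strong support vertex of `G`, and for every strong support
vertex `v`, at most one leaf neighbor of `v` lies outside `S`. -/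
theorem stmt14 {V : Type*} [Fintype V] (G : SimpleGraph V)
    (hiso : ∀ v : V, ∃ u : V, G.Adj v u)
    (S : Set V) (hS : IsTotalForcingSet G S) :
    ∀ v : V, IsStrongSupport G v →
      v ∈ S ∧ {x : V | G.Adj v x ∧ IsLeaf G x ∧ x ∉ S}.Subsingleton :=
  stmt14_general G S hS

end TotalForcing
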